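/- Let (W,S) be a Coxeter system and let I ⊆ S be such that W_I is a maximal finite standard parabolic subgroup of W, i.e., W_I is finite and W_J is infinite for every J with I ⊊ J ⊆ S. Then W_I is a maximal finite subgroup of W: every finite subgroup of W that contains W_I equals W_I. -/

import Mathlib

/-!
Everything happens in the geometric representation of `W` on `V = B →₀ ℝ`, where `s i` is the
reflection in the simple root `α_i` for the Tits form `B(α_a, α_b) = -cos (π / M a b)`; every root
`w α_i` is either nonnegative or nonpositive, and each `w` makes only finitely many positive roots
nonpositive.

Let `f` be the sum of the coordinates outside `I` and `p = ∑_{x ∈ H} f ∘ x⁻¹`. Then `p` is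
`H`-invariant, kills `α_i` for `i ∈ I`, and is `≤ 0` on only finitely many positive roots: off the
finitely many roots made nonpositive by some `x⁻¹`, `p ≥ 0`, with equality only at roots supported
in `I`, which are finitely many as `W_I` is finite.

Maximality of `I` makes such a `p` dominant. Otherwise pick a positive root `γ` with `p γ < 0`
minimising `f γ / -p γ`; then `ξ = f γ • p - p γ • f` is dominant and `ξ γ = 0`. The stabiliser of a
dominant functional `ξ` is generated by the `s b` with `ξ α_b = 0`, and this subgroup is finite
when `ξ` vanishes on finitely many positive roots (its reflections correspond to such roots, and
bound the length of reduced words); by maximality it is `W_I`. So the reflection in `γ` lies in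
`W_I`, hence fixes the coordinates of `γ` outside `I`, so `γ` is supported in `I` and `p γ = 0`.

Applied to the dominant `p` itself, the same stabiliser argument puts `H` inside `W_I`.
-/

open Finsupp Polynomial.Chebyshev

noncomputable section

lemma Finsupp.supported_le_ker {α R N : Type*} [Semiring R] [AddCommMonoid N] [Module R N]
    {f : (α →₀ R) →ₗ[R] N} {s : Set α} (hf : ∀ a ∈ s, f (single a 1) = 0) :
    supported R R s ≤ LinearMap.ker f := by
  rw [supported_eq_span_single, Submodule.span_le]
  rintro _ ⟨a, ha, rfl⟩
  exact hf a ha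

def heightOutside {B : Type*} (I : Set B) : Module.Dual ℝ (B →₀ ℝ) :=
  linearCombination ℝ (Iᶜ.indicator 1)

section heightOutside

variable {B : Type*} {I : Set B}

lemma heightOutside_single_of_mem {i : B} (hi : i ∈ I) : heightOutside I (single i 1) = 0 := by
  simp [heightOutside, hi]

lemma heightOutside_nonneg {v : B →₀ ℝ} (hv : 0 ≤ v) : 0 ≤ heightOutside I v :=
  Finsupp.sum_nonneg' fun b =>
    mul_nonneg (Finsupp.le_def.mp hv b) (Set.indicator_nonneg (by simp) b)

lemma mem_supported_of_heightOutside_eq_zero {v : B →₀ ℝ} (hv : 0 ≤ v)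
    (h : heightOutside I v = 0) : v ∈ supported ℝ ℝ I := by
  refine (mem_supported ℝ v).mpr fun b hb => by_contra fun hbI => mem_support_iff.mp hb ?_
  rw [heightOutside, linearCombination_apply, Finsupp.sum] at h
  have := (Finset.sum_eq_zero_iff_of_nonneg fun c _ => mul_nonneg (Finsupp.le_def.mp hv c)
    (Set.indicator_nonneg (by simp) c)).mp h b hb
  simpa [hbI] using this

end heightOutside

lemma exists_forall_nonneg_mul_sub_mul {X : Type*} {S : Set X} {p f : X → ℝ}
    (hfin : {x ∈ S | p x < 0}.Finite) (hne : ∃ x ∈ S, p x < 0) (hf : ∀ x ∈ S, 0 ≤ f x) :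
    ∃ y ∈ S, p y < 0 ∧ ∀ x ∈ S, 0 ≤ f y * p x - p y * f x := by
  obtain ⟨y, ⟨hyS, hy⟩, hmin⟩ := Set.exists_min_image _ (fun x => f x / -p x) hfin hne
  refine ⟨y, hyS, hy, fun x hx => ?_⟩
  rcases lt_or_ge (p x) 0 with hpx | hpx
  · have := hmin x ⟨hx, hpx⟩
    rw [div_le_div_iff₀ (by linarith) (by linarith)] at this
    linarith
  · nlinarith [hf x hx, hf y hyS]

section

open Real

/-- `cos (π / m)`, where `m = 0` stands for `m = ∞` (as in `CoxeterMatrix`) and gives `cos 0`. -/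
def cosPiDiv (m : ℕ) : ℝ := if m = 0 then 1 else cos (π / m)

lemma cosPiDiv_one : cosPiDiv 1 = -1 := by simp [cosPiDiv]

lemma sin_pi_div_pos {m : ℕ} (hm : 2 ≤ m) : 0 < sin (π / m) :=
  sin_pos_of_pos_of_lt_pi (by positivity) (div_lt_self pi_pos (by exact_mod_cast hm))

lemma cosPiDiv_sq_lt_one {m : ℕ} (hm : 2 ≤ m) : cosPiDiv m ^ 2 < 1 := by
  rw [cosPiDiv, if_neg (by omega)]
  nlinarith [sin_sq_add_cos_sq (π / m), sin_pi_div_pos hm]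

lemma U_eval_cosPiDiv_nonneg {m : ℕ} (hm : m ≠ 1) {n : ℤ} (hn : -1 ≤ n) (hnm : m = 0 ∨ n < m) :
    0 ≤ (U ℝ n).eval (cosPiDiv m) := by
  rcases hn.eq_or_lt with rfl | hn
  · simp [U_neg_one]
  rcases hnm with rfl | hnm
  · rw [cosPiDiv, if_pos rfl, U_eval_one]
    exact_mod_cast (show (0 : ℤ) ≤ n + 1 by omega)
  have hm2 : 2 ≤ m := by omega
  have hsin := sin_pi_div_pos hm2
  have hU := U_real_cos (π / m) n
  rw [cosPiDiv, if_neg (by omega)]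
  refine nonneg_of_mul_nonneg_left (hU ▸ sin_nonneg_of_nonneg_of_le_pi ?_ ?_) hsin
  · have : (0 : ℝ) ≤ n + 1 := by exact_mod_cast (by omega : 0 ≤ n + 1)
    positivity
  · calc ((n : ℝ) + 1) * (π / m) ≤ m * (π / m) := by
          gcongr; exact_mod_cast (by omega : n + 1 ≤ m)
      _ = π := by field_simp

lemma U_eval_cosPiDiv_two_mul {m : ℕ} (hm : 2 ≤ m) :
    (U ℝ (2 * m)).eval (cosPiDiv m) = 1 ∧ (U ℝ (2 * m - 1)).eval (cosPiDiv m) = 0 := by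
  have hsin := sin_pi_div_pos hm
  have hm0 : (m : ℝ) ≠ 0 := by positivity
  rw [cosPiDiv, if_neg (by omega)]
  constructor
  · refine mul_right_cancel₀ hsin.ne' ?_
    rw [U_real_cos, one_mul, ← sin_add_two_pi (π / m)]
    congr 1
    push_cast
    field_simp
    ring
  · refine (mul_eq_zero.mp ?_).resolve_right hsin.ne'
    rw [U_real_cos, show (((2 * m - 1 : ℤ) : ℝ) + 1) * (π / m) = 2 * π by
      push_cast; field_simp; ring, sin_two_pi]

end

namespace CoxeterSystem

variable {B : Type*}

lemma prod_map_alternatingWord_two_mul {G : Type*} [Monoid G] (f : B → G) (i j : B) (m : ℕ) :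
    ((alternatingWord i j (2 * m)).map f).prod = (f i * f j) ^ m := by
  induction m with
  | zero => simp [alternatingWord]
  | succ m ih =>
    rw [show 2 * (m + 1) = 2 * m + 1 + 1 by ring, alternatingWord_succ', alternatingWord_succ',
      if_neg (by simp [parity_simps]), if_pos (by simp [parity_simps])]
    simp only [List.map_cons, List.prod_cons, ih, pow_succ', mul_assoc]

end CoxeterSystem

namespace CoxeterMatrix

open CoxeterSystem

variable {B : Type*} (M : CoxeterMatrix B)

def bilinForm : LinearMap.BilinForm ℝ (B →₀ ℝ) :=
  linearCombination ℝ fun a => linearCombination ℝ fun b => -cosPiDiv (M a b)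

@[simp]
lemma bilinForm_single_single (a b : B) :
    M.bilinForm (single a 1) (single b 1) = -cosPiDiv (M a b) := by
  simp [bilinForm]

lemma bilinForm_single_self (b : B) : M.bilinForm (single b 1) (single b 1) = 1 := by
  simp [cosPiDiv_one]

lemma bilinForm_comm (x y : B →₀ ℝ) : M.bilinForm x y = M.bilinForm y x := by
  suffices M.bilinForm.flip = M.bilinForm from (LinearMap.congr_fun₂ this y x)
  ext a b
  simp [M.symmetric a b]

def simpleReflection (b : B) : (B →₀ ℝ) ≃ₗ[ℝ] (B →₀ ℝ) :=
  Module.reflection (x := single b 1) (f := 2 • M.bilinForm (single b 1))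
    (by simp [cosPiDiv_one])

lemma simpleReflection_apply (b : B) (v : B →₀ ℝ) :
    M.simpleReflection b v = v - (2 * M.bilinForm (single b 1) v) • single b 1 := by
  simp [simpleReflection, Module.reflection_apply]

@[simp]
lemma simpleReflection_single_self (b : B) :
    M.simpleReflection b (single b 1) = -single b 1 :=
  Module.reflection_apply_self _

lemma simpleReflection_single (b c : B) :
    M.simpleReflection b (single c 1) = single c 1 + (2 * cosPiDiv (M b c)) • single b 1 := by
  rw [simpleReflection_apply, bilinForm_single_single]
  module

@[simp]
lemma simpleReflection_inv (b : B) : (M.simpleReflection b)⁻¹ = M.simpleReflection b :=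
  Module.reflection_inv _

lemma simpleReflection_mul_self (b : B) : M.simpleReflection b * M.simpleReflection b = 1 := by
  rw [← inv_mul_cancel (M.simpleReflection b), simpleReflection_inv]

lemma bilinForm_simpleReflection (b : B) (x y : B →₀ ℝ) :
    M.bilinForm (M.simpleReflection b x) (M.simpleReflection b y) = M.bilinForm x y := by
  simp only [simpleReflection_apply, map_sub, map_smul, LinearMap.sub_apply,
    LinearMap.smul_apply, smul_eq_mul, bilinForm_single_self, M.bilinForm_comm x (single b 1)]
  ring

lemma prod_map_simpleReflection_alternatingWord (i j : B) (k : ℕ) :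
    ((alternatingWord i j k).map M.simpleReflection).prod (single i 1) =
      (U ℝ k).eval (cosPiDiv (M i j)) • single (if Even k then i else j) 1 +
        (U ℝ (k - 1)).eval (cosPiDiv (M i j)) • single (if Even k then j else i) 1 := by
  induction k with
  | zero => simp [alternatingWord]
  | succ k ih =>
    set c := if Even k then j else i
    set x := if Even k then i else j
    have hc : M c x = M i j := by
      unfold c x; split_ifs
      · exact M.symmetric j i
      · rfl
    rw [alternatingWord_succ', List.map_cons, List.prod_cons, LinearEquiv.mul_apply, ih,
      map_add, map_smul, map_smul, simpleReflection_single, hc, simpleReflection_single_self]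
    simp only [Nat.even_add_one, ite_not, Nat.cast_add, Nat.cast_one, add_sub_cancel_right,
      U_add_one, Polynomial.eval_sub, Polynomial.eval_mul, Polynomial.eval_ofNat, Polynomial.eval_X]
    module

lemma exists_eq_add_of_bilinForm_single_eq_zero {i j : B} (hd : cosPiDiv (M i j) ^ 2 ≠ 1)
    (v : B →₀ ℝ) : ∃ w : B →₀ ℝ, ∃ p q : ℝ, v = w + p • single i 1 + q • single j 1 ∧
      M.bilinForm (single i 1) w = 0 ∧ M.bilinForm (single j 1) w = 0 := by
  have hd' : 1 - cosPiDiv (M i j) ^ 2 ≠ 0 := sub_ne_zero.mpr (Ne.symm hd)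
  set x := M.bilinForm (single i 1) v
  set y := M.bilinForm (single j 1) v
  set p := (x + cosPiDiv (M i j) * y) / (1 - cosPiDiv (M i j) ^ 2)
  set q := (y + cosPiDiv (M i j) * x) / (1 - cosPiDiv (M i j) ^ 2)
  refine ⟨v - p • single i 1 - q • single j 1, p, q, by abel, ?_, ?_⟩ <;>
  · simp only [map_sub, map_smul, smul_eq_mul, bilinForm_single_single, M.symmetric j i,
      M.diagonal, cosPiDiv_one, p, q]
    field_simp
    ring

lemma simpleReflection_mul_pow_apply_of_bilinForm_eq_zero {i j : B} {w : B →₀ ℝ}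
    (hi : M.bilinForm (single i 1) w = 0) (hj : M.bilinForm (single j 1) w = 0) (n : ℕ) :
    ((M.simpleReflection i * M.simpleReflection j) ^ n) w = w := by
  rw [LinearEquiv.pow_apply]
  refine Function.iterate_fixed ?_ n
  simp [simpleReflection_apply, hi, hj]

lemma simpleReflection_mul_pow_single_self {i j : B} (hij : i ≠ j) (hm : M i j ≠ 0) :
    ((M.simpleReflection i * M.simpleReflection j) ^ M i j) (single i 1) = single i 1 := by
  obtain ⟨h1, h0⟩ := U_eval_cosPiDiv_two_mul (m := M i j) (by have := M.off_diagonal i j hij; omega)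
  rw [← prod_map_alternatingWord_two_mul, prod_map_simpleReflection_alternatingWord]
  push_cast
  simp [h1, h0]

lemma simpleReflection_mul_pow (i j : B) :
    (M.simpleReflection i * M.simpleReflection j) ^ M i j = 1 := by
  rcases eq_or_ne i j with rfl | hij
  · simp [simpleReflection_mul_self]
  rcases eq_or_ne (M i j) 0 with h0 | hm
  · simp [h0]
  set g := (M.simpleReflection i * M.simpleReflection j) ^ M i j
  have hi : g (single i 1) = single i 1 := M.simpleReflection_mul_pow_single_self hij hm
  have hj : g (single j 1) = single j 1 := by
    have hg : g⁻¹ = (M.simpleReflection j * M.simpleReflection i) ^ M j i := by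
      simp only [g, ← inv_pow, mul_inv_rev, simpleReflection_inv, M.symmetric j i]
    have h := M.simpleReflection_mul_pow_single_self hij.symm (M.symmetric j i ▸ hm)
    rw [← hg] at h
    calc g (single j 1) = g (g⁻¹ (single j 1)) := by rw [h]
      _ = single j 1 := by simp
  have hd : cosPiDiv (M i j) ^ 2 ≠ 1 :=
    (cosPiDiv_sq_lt_one (by have := M.off_diagonal i j hij; omega)).ne
  -- `g` fixes `α_i`, `α_j` and their orthogonal complement, which together span `B →₀ ℝ`.
  ext1 v
  obtain ⟨w, p, q, rfl, hwi, hwj⟩ := M.exists_eq_add_of_bilinForm_single_eq_zero hd v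
  rw [LinearEquiv.coe_one, id, map_add, map_add, map_smul, map_smul, hi, hj,
    M.simpleReflection_mul_pow_apply_of_bilinForm_eq_zero hwi hwj]

lemma isLiftable_simpleReflection : M.IsLiftable M.simpleReflection :=
  M.simpleReflection_mul_pow

end CoxeterMatrix

namespace CoxeterSystem

variable {B W : Type*} [Group W] {M : CoxeterMatrix B} (cs : CoxeterSystem M W)

local prefix:100 "s" => cs.simple
local prefix:100 "π" => cs.wordProd
local prefix:100 "ℓ" => cs.length

def geomRep : W →* (B →₀ ℝ) ≃ₗ[ℝ] (B →₀ ℝ) :=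
  cs.lift ⟨M.simpleReflection, M.isLiftable_simpleReflection⟩

@[simp]
lemma geomRep_simple (i : B) : cs.geomRep (s i) = M.simpleReflection i :=
  cs.lift_apply_simple _ i

lemma bilinForm_geomRep (w : W) (x y : B →₀ ℝ) :
    M.bilinForm (cs.geomRep w x) (cs.geomRep w y) = M.bilinForm x y := by
  induction w using cs.simple_induction_left generalizing x y with
  | one => simp
  | mul_simple_left w i ih => simp [LinearEquiv.mul_apply, M.bilinForm_simpleReflection, ih]

lemma geomRep_wordProd_alternatingWord (i j : B) (k : ℕ) :
    cs.geomRep (π (alternatingWord i j k)) (single i 1) =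
      (U ℝ k).eval (cosPiDiv (M i j)) • single (if Even k then i else j) 1 +
        (U ℝ (k - 1)).eval (cosPiDiv (M i j)) • single (if Even k then j else i) 1 := by
  have : cs.geomRep ∘ cs.simple = M.simpleReflection := funext cs.geomRep_simple
  rw [wordProd, map_list_prod, List.map_map, this]
  exact M.prod_map_simpleReflection_alternatingWord i j k

lemma lt_of_length_mul_wordProd_alternatingWord {w : W} {i j : B} {k : ℕ}
    (hlen : ℓ (w * π (alternatingWord i j k)) = ℓ w + k)
    (hi : ¬ cs.IsRightDescent (w * π (alternatingWord i j k)) i) (hm : M i j ≠ 0) :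
    k < M i j := by
  by_contra! hk
  rcases hk.lt_or_eq with hlt | rfl
  · refine cs.not_isReduced_alternatingWord i j hm hlt (le_antisymm ?_ ?_)
    · simpa using cs.length_wordProd_le (alternatingWord i j k)
    · have := cs.length_mul_le w (π (alternatingWord i j k))
      rw [length_alternatingWord]
      omega
  · obtain ⟨k, hk⟩ : ∃ k, M i j = k + 1 := ⟨M i j - 1, by omega⟩
    have hbraid := cs.wordProd_braidWord_eq i j
    simp only [braidWord, M.symmetric j i] at hbraid
    rw [hbraid, hk, alternatingWord_succ, wordProd_concat, ← mul_assoc] at hi hlen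
    rw [not_isRightDescent_iff, simple_mul_simple_cancel_right] at hi
    have := cs.length_mul_le w (π (alternatingWord i j k))
    have := cs.length_wordProd_le (alternatingWord i j k)
    rw [length_alternatingWord] at this
    omega

theorem exists_mul_wordProd_alternatingWord {w : W} {i j : B}
    (hj : cs.IsRightDescent w j) (hi : ¬ cs.IsRightDescent w i) :
    ∃ w' k, w = w' * π (alternatingWord i j k) ∧ ℓ w' < ℓ w ∧ ¬ cs.IsRightDescent w' i ∧
      ¬ cs.IsRightDescent w' j ∧ (M i j = 0 ∨ k < M i j) := by
  classical
  let P k := ∃ w', w = w' * π (alternatingWord i j k) ∧ ℓ w' + k = ℓ w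
  have hP1 : P 1 := ⟨w * s j, by simp [alternatingWord], (cs.isRightDescent_iff.mp hj)⟩
  have hle : ∀ k, P k → k ≤ ℓ w := fun k ⟨_, _, h⟩ => by omega
  obtain ⟨w', hw, hlen⟩ : P (Nat.findGreatest P (ℓ w)) := Nat.findGreatest_spec (hle 1 hP1) hP1
  set k := Nat.findGreatest P (ℓ w)
  have hk1 : 1 ≤ k := Nat.le_findGreatest (hle 1 hP1) hP1
  -- Prolonging the alternating suffix by its next letter would contradict maximality of `k`.
  have hnext : ¬ cs.IsRightDescent w' (if Even k then j else i) := by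
    intro hd
    have hP : P (k + 1) := ⟨w' * s _, by
      rw [alternatingWord_succ', wordProd_cons, ← mul_assoc, simple_mul_simple_cancel_right, hw],
      by have := cs.isRightDescent_iff.mp hd; omega⟩
    exact Nat.findGreatest_is_greatest (Nat.lt_succ_self k) (hle _ hP) hP
  -- Cancelling its first letter would make `w` shorter than `ℓ w' + k`.
  have hfirst : ¬ cs.IsRightDescent w' (if Even k then i else j) := by
    intro hd
    obtain ⟨k', hk'⟩ : ∃ k', k = k' + 1 := ⟨k - 1, by omega⟩
    have hw' : w = w' * s (if Even k then i else j) * π (alternatingWord i j k') := by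
      rw [hw, hk', alternatingWord_succ', wordProd_cons, mul_assoc]
      simp only [Nat.even_add_one, ite_not]
    have h1 := cs.length_mul_le (w' * s (if Even k then i else j)) (π (alternatingWord i j k'))
    have h2 := cs.length_wordProd_le (alternatingWord i j k')
    have h3 := cs.isRightDescent_iff.mp hd
    rw [← hw'] at h1
    rw [length_alternatingWord] at h2
    omega
  have hi' : ¬ cs.IsRightDescent w' i := by
    split_ifs at hnext hfirst <;> assumption
  have hj' : ¬ cs.IsRightDescent w' j := by
    split_ifs at hnext hfirst <;> assumption
  refine ⟨w', k, hw, by omega, hi', hj', ?_⟩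
  rw [or_iff_not_imp_left]
  exact cs.lt_of_length_mul_wordProd_alternatingWord (by rw [← hw]; omega) (hw ▸ hi)

theorem geomRep_single_nonneg {w : W} {i : B} (hi : ¬ cs.IsRightDescent w i) :
    0 ≤ cs.geomRep w (single i 1) := by
  induction hn : ℓ w using Nat.strong_induction_on generalizing w i with
  | _ n ih =>
  rcases eq_or_ne w 1 with rfl | hw
  · simp
  obtain ⟨j, hj⟩ := cs.exists_rightDescent_of_ne_one hw
  have hij : i ≠ j := by rintro rfl; exact hi hj
  -- `w = w' v` with `v` alternating in `i, j` of length `k < M i j`: `v α_i` is a nonnegative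
  -- combination of `α_i` and `α_j`, and both are sent to nonnegative vectors by `w'`.
  obtain ⟨w', k, rfl, hlt, hi', hj', hk⟩ := cs.exists_mul_wordProd_alternatingWord hj hi
  have hU : ∀ n : ℤ, -1 ≤ n → n ≤ k → 0 ≤ (U ℝ n).eval (cosPiDiv (M i j)) := fun n h1 h2 =>
    U_eval_cosPiDiv_nonneg (M.off_diagonal i j hij) h1 (by omega)
  have hw' : ∀ b, ¬ cs.IsRightDescent w' b → 0 ≤ cs.geomRep w' (single b 1) :=
    fun b hb => ih _ (hn ▸ hlt) hb rfl
  rw [map_mul, LinearEquiv.mul_apply, geomRep_wordProd_alternatingWord, map_add, map_smul,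
    map_smul]
  refine add_nonneg (smul_nonneg (hU _ (by omega) le_rfl) ?_)
    (smul_nonneg (hU _ (by omega) (by omega)) ?_) <;> split_ifs <;> exact hw' _ ‹_›

theorem geomRep_single_nonpos {w : W} {i : B} (hi : cs.IsRightDescent w i) :
    cs.geomRep w (single i 1) ≤ 0 := by
  have h := cs.geomRep_single_nonneg (w := w * s i) (i := i) (by
    rwa [isRightDescent_iff_not_isRightDescent_mul] at hi)
  rwa [map_mul, LinearEquiv.mul_apply, geomRep_simple, M.simpleReflection_single_self, map_neg,
    neg_nonneg] at h

def roots : Set (B →₀ ℝ) := {v | ∃ w i, cs.geomRep w (single i 1) = v}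

def posRoots : Set (B →₀ ℝ) := {v ∈ cs.roots | 0 ≤ v}

variable {cs}

lemma single_mem_posRoots (i : B) : single i 1 ∈ cs.posRoots :=
  ⟨⟨1, i, by simp⟩, by simp⟩

lemma geomRep_mem_roots {v : B →₀ ℝ} (hv : v ∈ cs.roots) (w : W) : cs.geomRep w v ∈ cs.roots := by
  obtain ⟨y, i, rfl⟩ := hv
  exact ⟨w * y, i, by simp [LinearEquiv.mul_apply]⟩

lemma neg_mem_roots {v : B →₀ ℝ} (hv : v ∈ cs.roots) : -v ∈ cs.roots := by
  obtain ⟨y, i, rfl⟩ := hv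
  exact ⟨y * s i, i, by simp [LinearEquiv.mul_apply]⟩

lemma neg_mem_posRoots {v : B →₀ ℝ} (hv : v ∈ cs.roots) (h : v ≤ 0) : -v ∈ cs.posRoots :=
  ⟨neg_mem_roots hv, neg_nonneg.mpr h⟩

lemma nonneg_or_nonpos_of_mem_roots {v : B →₀ ℝ} (hv : v ∈ cs.roots) : 0 ≤ v ∨ v ≤ 0 := by
  obtain ⟨w, i, rfl⟩ := hv
  by_cases hi : cs.IsRightDescent w i
  · exact Or.inr (cs.geomRep_single_nonpos hi)
  · exact Or.inl (cs.geomRep_single_nonneg hi)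

lemma bilinForm_self_of_mem_roots {v : B →₀ ℝ} (hv : v ∈ cs.roots) : M.bilinForm v v = 1 := by
  obtain ⟨w, i, rfl⟩ := hv
  rw [bilinForm_geomRep, M.bilinForm_single_self]

lemma ne_zero_of_mem_roots {v : B →₀ ℝ} (hv : v ∈ cs.roots) : v ≠ 0 := by
  rintro rfl
  simpa using bilinForm_self_of_mem_roots hv

lemma eq_single_of_mem_posRoots {β : B →₀ ℝ} (hβ : β ∈ cs.posRoots) {b : B}
    (h : M.simpleReflection b β ≤ 0) : β = single b 1 := by
  have hβ0 : ∀ i, 0 ≤ β i := Finsupp.le_def.mp hβ.2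
  have hsupp : β = single b (β b) := by
    refine eq_single_iff.mpr ⟨fun b' hb' => Finset.mem_singleton.mpr ?_, rfl⟩
    by_contra hne
    have := Finsupp.le_def.mp h b'
    simp [M.simpleReflection_apply, single_eq_of_ne hne] at this
    exact (mem_support_iff.mp hb') (le_antisymm this (hβ0 b'))
  have hβb : β b * β b = 1 := by
    have := bilinForm_self_of_mem_roots hβ.1
    rw [hsupp, ← smul_single_one] at this
    simpa only [map_smul, LinearMap.smul_apply, smul_eq_mul, M.bilinForm_single_self,
      mul_one] using this
  have : β b = 1 := by nlinarith [hβ0 b]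
  rwa [this] at hsupp

variable (cs)

theorem finite_posRoots_geomRep_nonpos (y : W) :
    {β ∈ cs.posRoots | cs.geomRep y β ≤ 0}.Finite := by
  obtain ⟨ω, rfl⟩ := cs.wordProd_surjective y
  induction ω with
  | nil =>
    refine Set.finite_empty.subset fun β ⟨hβ, hle⟩ => ?_
    simp only [wordProd_nil, map_one, LinearEquiv.coe_one, id] at hle
    exact ne_zero_of_mem_roots hβ.1 (le_antisymm hle hβ.2)
  | cons b ω ih =>
    refine (ih.union (Set.finite_singleton ((cs.geomRep (π ω)).symm (single b 1)))).subset ?_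
    rintro β ⟨hβ, hle⟩
    rcases nonneg_or_nonpos_of_mem_roots (geomRep_mem_roots hβ.1 (π ω)) with hpos | hnonpos
    · right
      rw [wordProd_cons, map_mul, LinearEquiv.mul_apply, geomRep_simple] at hle
      rw [Set.mem_singleton_iff, LinearEquiv.eq_symm_apply]
      exact eq_single_of_mem_posRoots ⟨geomRep_mem_roots hβ.1 _, hpos⟩ hle
    · exact Or.inl ⟨hβ, hnonpos⟩

lemma geomRep_injective : Function.Injective cs.geomRep := by
  refine (injective_iff_map_eq_one _).mpr fun w hw => ?_
  by_contra hw1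
  obtain ⟨b, hb⟩ := cs.exists_rightDescent_of_ne_one hw1
  have := Finsupp.le_def.mp (cs.geomRep_single_nonpos hb) b
  norm_num [hw] at this

lemma simple_injective : Function.Injective cs.simple := by
  intro b c h
  by_contra hne
  have := congrArg (fun w => cs.geomRep w (single b 1) b) h
  norm_num [M.simpleReflection_single, single_eq_of_ne hne, cosPiDiv_one] at this

lemma geomRep_conj_simple_apply (y : W) (c : B) (v : B →₀ ℝ) :
    cs.geomRep (y * s c * y⁻¹) v =
      v - (2 * M.bilinForm (cs.geomRep y (single c 1)) v) • cs.geomRep y (single c 1) := by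
  have h := cs.bilinForm_geomRep y (single c 1) (cs.geomRep y⁻¹ v)
  simp only [map_mul, map_inv, LinearEquiv.mul_apply, LinearEquiv.coe_inv,
    LinearEquiv.apply_symm_apply] at h ⊢
  rw [geomRep_simple, M.simpleReflection_apply, map_sub, map_smul, h,
    LinearEquiv.apply_symm_apply]

lemma IsReflection.exists_posRoots {t : W} (ht : cs.IsReflection t) :
    ∃ β ∈ cs.posRoots, ∀ v, cs.geomRep t v = v - (2 * M.bilinForm β v) • β := by
  obtain ⟨y, c, rfl⟩ := ht
  have hroot : cs.geomRep y (single c 1) ∈ cs.roots := ⟨y, c, rfl⟩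
  rcases nonneg_or_nonpos_of_mem_roots hroot with hpos | hneg
  · exact ⟨_, ⟨hroot, hpos⟩, cs.geomRep_conj_simple_apply y c⟩
  · refine ⟨_, neg_mem_posRoots hroot hneg, fun v => ?_⟩
    rw [geomRep_conj_simple_apply, map_neg, LinearMap.neg_apply]
    module

lemma geomRep_apply_of_notMem {K : Set B} {u : W} (hu : u ∈ Subgroup.closure (cs.simple '' K))
    (v : B →₀ ℝ) {b : B} (hb : b ∉ K) : cs.geomRep u v b = v b := by
  induction hu using Subgroup.closure_induction generalizing v with
  | mem x hx =>
    obtain ⟨c, hc, rfl⟩ := hx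
    rw [geomRep_simple, M.simpleReflection_apply, coe_sub, Pi.sub_apply, coe_smul, Pi.smul_apply,
      single_eq_of_ne (ne_of_mem_of_not_mem hc hb).symm, smul_zero, sub_zero]
  | one => simp
  | mul x y _ _ hx hy => rw [map_mul, LinearEquiv.mul_apply, hx, hy]
  | inv x _ hx =>
    rw [← hx, map_inv, LinearEquiv.coe_inv, LinearEquiv.apply_symm_apply]

lemma map_geomRep_of_mem_closure {p : Module.Dual ℝ (B →₀ ℝ)} {K : Set B}
    (hK : ∀ b ∈ K, p (single b 1) = 0) {u : W} (hu : u ∈ Subgroup.closure (cs.simple '' K))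
    (v : B →₀ ℝ) : p (cs.geomRep u v) = p v := by
  induction hu using Subgroup.closure_induction generalizing v with
  | mem x hx =>
    obtain ⟨c, hc, rfl⟩ := hx
    rw [geomRep_simple, M.simpleReflection_apply, map_sub, map_smul, hK c hc, smul_zero, sub_zero]
  | one => simp
  | mul x y _ _ hx hy => rw [map_mul, LinearEquiv.mul_apply, hx, hy]
  | inv x _ hx =>
    rw [← hx, map_inv, LinearEquiv.coe_inv, LinearEquiv.apply_symm_apply]

lemma mem_of_isRightDescent_of_mem_closure {K : Set B} {u : W}
    (hu : u ∈ Subgroup.closure (cs.simple '' K)) {b : B} (hb : cs.IsRightDescent u b) : b ∈ K := by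
  by_contra hbK
  have := Finsupp.le_def.mp (cs.geomRep_single_nonpos hb) b
  rw [cs.geomRep_apply_of_notMem hu _ hbK] at this
  norm_num at this

lemma exists_isReduced_of_mem_closure {K : Set B} {u : W}
    (hu : u ∈ Subgroup.closure (cs.simple '' K)) :
    ∃ ω : List B, cs.IsReduced ω ∧ (∀ b ∈ ω, b ∈ K) ∧ u = π ω := by
  induction hn : ℓ u using Nat.strong_induction_on generalizing u with
  | _ n ih =>
  rcases eq_or_ne u 1 with rfl | hu1
  · exact ⟨[], by simp [IsReduced], by simp, rfl⟩
  obtain ⟨b, hb⟩ := cs.exists_rightDescent_of_ne_one hu1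
  have hbK := cs.mem_of_isRightDescent_of_mem_closure hu hb
  have hlen := cs.isRightDescent_iff.mp hb
  obtain ⟨ω, hω, hωK, hu'⟩ := ih _ (by omega)
    (mul_mem hu (Subgroup.subset_closure ⟨b, hbK, rfl⟩)) rfl
  refine ⟨ω.concat b, ?_, ?_, ?_⟩
  · rw [IsReduced, wordProd_concat, ← hu', simple_mul_simple_cancel_right, List.length_concat,
      ← hω.eq, ← hu', hlen]
  · simp only [List.concat_eq_append, List.mem_append, List.mem_singleton]
    rintro x (hx | rfl)
    exacts [hωK x hx, hbK]
  · rw [wordProd_concat, ← hu', simple_mul_simple_cancel_right]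

lemma finite_isReflection_mem_closure_ker {p : Module.Dual ℝ (B →₀ ℝ)}
    (hp : {β ∈ cs.posRoots | p β = 0}.Finite) :
    {t | cs.IsReflection t ∧
      t ∈ Subgroup.closure (cs.simple '' {b | p (single b 1) = 0})}.Finite := by
  let reflectionAlong (β : B →₀ ℝ) (v : B →₀ ℝ) : B →₀ ℝ := v - (2 * M.bilinForm β v) • β
  refine Set.Finite.of_finite_image ((hp.image reflectionAlong).subset ?_)
    (DFunLike.coe_injective.comp cs.geomRep_injective).injOn
  rintro _ ⟨t, ⟨ht, htK⟩, rfl⟩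
  obtain ⟨β, hβ, hβt⟩ := ht.exists_posRoots
  refine ⟨β, ⟨hβ, ?_⟩, funext fun v => (hβt v).symm⟩
  have h := cs.map_geomRep_of_mem_closure (fun b hb => hb) htK β
  rw [hβt, bilinForm_self_of_mem_roots hβ.1, map_sub, map_smul, smul_eq_mul] at h
  linarith

lemma wordProd_mem_closure {K : Set B} {ω : List B} (hω : ∀ b ∈ ω, b ∈ K) :
    π ω ∈ Subgroup.closure (cs.simple '' K) :=
  Subgroup.list_prod_mem _ fun _ hx => by
    obtain ⟨b, hb, rfl⟩ := List.mem_map.mp hx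
    exact Subgroup.subset_closure ⟨b, hω b hb, rfl⟩

lemma mem_closure_of_mem_rightInvSeq {K : Set B} {ω : List B} (hω : ∀ b ∈ ω, b ∈ K) {t : W}
    (ht : t ∈ cs.rightInvSeq ω) : t ∈ Subgroup.closure (cs.simple '' K) := by
  induction ω with
  | nil => simp at ht
  | cons b ω ih =>
    obtain ⟨hb, hω⟩ := List.forall_mem_cons.mp hω
    rcases List.mem_cons.mp ht with rfl | ht
    · have hπ := cs.wordProd_mem_closure hω
      exact mul_mem (mul_mem (inv_mem hπ) (Subgroup.subset_closure ⟨b, hb, rfl⟩)) hπ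
    · exact ih hω ht

theorem finite_closure_ker_of_finite_posRoots {p : Module.Dual ℝ (B →₀ ℝ)}
    (hp : {β ∈ cs.posRoots | p β = 0}.Finite) :
    Finite (Subgroup.closure (cs.simple '' {b | p (single b 1) = 0})) := by
  classical
  set K := {b | p (single b 1) = 0}
  have hT := cs.finite_isReflection_mem_closure_ker hp
  have hK : K.Finite := (hT.preimage cs.simple_injective.injOn).subset fun b hb =>
    ⟨cs.isReflection_simple b, Subgroup.subset_closure ⟨b, hb, rfl⟩⟩
  -- The right inversion sequence of a reduced word over `K` lists distinct reflections of `W_K`.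
  have hlen : ∀ ω : List B, cs.IsReduced ω → (∀ b ∈ ω, b ∈ K) → ω.length ≤ hT.toFinset.card := by
    intro ω hω hωK
    rw [← cs.length_rightInvSeq, ← List.toFinset_card_of_nodup hω.nodup_rightInvSeq]
    refine Finset.card_le_card fun t ht => hT.mem_toFinset.mpr ⟨?_, ?_⟩
    · exact cs.isReflection_of_mem_rightInvSeq ω (List.mem_toFinset.mp ht)
    · exact cs.mem_closure_of_mem_rightInvSeq hωK (List.mem_toFinset.mp ht)
  have := hK.to_subtype
  refine Set.Finite.to_subtype (((List.finite_length_le K hT.toFinset.card).image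
    fun l => π (l.map Subtype.val)).subset fun u hu => ?_)
  obtain ⟨ω, hω, hωK, rfl⟩ := cs.exists_isReduced_of_mem_closure hu
  refine ⟨ω.attachWith (· ∈ K) hωK, ?_, by simp only [List.attachWith_map_subtype_val]⟩
  simpa using hlen ω hω hωK

theorem mem_closure_of_map_geomRep {p : Module.Dual ℝ (B →₀ ℝ)}
    (hp : ∀ β ∈ cs.posRoots, 0 ≤ p β) {w : W} (hw : ∀ v, p (cs.geomRep w v) = p v) :
    w ∈ Subgroup.closure (cs.simple '' {b | p (single b 1) = 0}) := by
  induction hn : ℓ w using Nat.strong_induction_on generalizing w with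
  | _ n ih =>
  rcases eq_or_ne w 1 with rfl | hw1
  · exact one_mem _
  obtain ⟨b, hb⟩ := cs.exists_rightDescent_of_ne_one hw1
  have hroot : cs.geomRep w (single b 1) ∈ cs.roots := ⟨w, b, rfl⟩
  have hpb : p (single b 1) = 0 := by
    have h1 := hp _ (neg_mem_posRoots hroot (cs.geomRep_single_nonpos hb))
    have h2 := hp _ (single_mem_posRoots (cs := cs) b)
    rw [map_neg, hw] at h1
    linarith
  have hmem : w * s b ∈ Subgroup.closure (cs.simple '' {b | p (single b 1) = 0}) := by
    refine ih _ (hn ▸ (by have := cs.isRightDescent_iff.mp hb; omega)) (fun v => ?_) rfl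
    rw [map_mul, LinearEquiv.mul_apply, hw, geomRep_simple, M.simpleReflection_apply, map_sub,
      map_smul, hpb, smul_zero, sub_zero]
  simpa using mul_mem hmem (Subgroup.subset_closure ⟨b, hpb, rfl⟩)

theorem finite_posRoots_supported {I : Set B} (hI : Finite (Subgroup.closure (cs.simple '' I))) :
    {β ∈ cs.posRoots | β ∈ supported ℝ ℝ I}.Finite := by
  obtain ⟨⟨w₀, hw₀⟩, hmax⟩ := Finite.exists_max fun u : Subgroup.closure (cs.simple '' I) => ℓ u
  have hdesc : ∀ i ∈ I, cs.IsRightDescent w₀ i := fun i hi =>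
    lt_of_le_of_ne (hmax ⟨_, mul_mem hw₀ (Subgroup.subset_closure ⟨i, hi, rfl⟩)⟩)
      (cs.length_mul_simple_ne w₀ i)
  refine (cs.finite_posRoots_geomRep_nonpos w₀).subset ?_
  rintro β ⟨hβ, hβI⟩
  refine ⟨hβ, ?_⟩
  conv_lhs => rw [← β.sum_single]
  rw [map_finsuppSum]
  refine Finsupp.sum_nonpos fun b hb => ?_
  rw [← smul_single_one, map_smul]
  exact smul_nonpos_of_nonneg_of_nonpos (Finsupp.le_def.mp hβ.2 b)
    (cs.geomRep_single_nonpos (hdesc b ((mem_supported ℝ β).mp hβI hb)))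

variable {cs}

theorem mem_closure_of_map_geomRep_of_forall_ssubset {I : Set B}
    (hmax : ∀ J : Set B, I ⊂ J → Infinite (Subgroup.closure (cs.simple '' J)))
    {p : Module.Dual ℝ (B →₀ ℝ)} (hp : ∀ β ∈ cs.posRoots, 0 ≤ p β)
    (hz : {β ∈ cs.posRoots | p β = 0}.Finite) (hpI : ∀ i ∈ I, p (single i 1) = 0) {w : W}
    (hw : ∀ v, p (cs.geomRep w v) = p v) : w ∈ Subgroup.closure (cs.simple '' I) := by
  have hK : {b | p (single b 1) = 0} = I := by
    by_contra hne
    exact @not_finite _ (hmax _ (Set.ssubset_iff_subset_ne.mpr ⟨hpI, Ne.symm hne⟩))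
      (cs.finite_closure_ker_of_finite_posRoots hz)
  exact hK ▸ cs.mem_closure_of_map_geomRep hp hw

theorem nonneg_of_finite_posRoots_neg {I : Set B} (hI : Finite (Subgroup.closure (cs.simple '' I)))
    (hmax : ∀ J : Set B, I ⊂ J → Infinite (Subgroup.closure (cs.simple '' J)))
    {p : Module.Dual ℝ (B →₀ ℝ)} (hneg : {β ∈ cs.posRoots | p β < 0}.Finite)
    (hpI : ∀ i ∈ I, p (single i 1) = 0) : ∀ β ∈ cs.posRoots, 0 ≤ p β := by
  by_contra! hne
  set f := heightOutside I
  obtain ⟨γ, hγ, hpγ, hξ⟩ := exists_forall_nonneg_mul_sub_mul hneg hne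
    fun β hβ => heightOutside_nonneg (I := I) hβ.2
  set ξ := f γ • p - p γ • f
  have hξ_apply : ∀ v, ξ v = f γ * p v - p γ * f v := fun v => rfl
  have hξI : ∀ i ∈ I, ξ (single i 1) = 0 := fun i hi => by
    rw [hξ_apply, hpI i hi, heightOutside_single_of_mem hi, mul_zero, mul_zero, sub_zero]
  have hξz : {β ∈ cs.posRoots | ξ β = 0}.Finite := by
    refine (hneg.union (cs.finite_posRoots_supported hI)).subset fun β ⟨hβ, hξβ⟩ => ?_
    rcases lt_or_ge (p β) 0 with hpβ | hpβ
    · exact Or.inl ⟨hβ, hpβ⟩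
    · refine Or.inr ⟨hβ, mem_supported_of_heightOutside_eq_zero hβ.2 ?_⟩
      rw [hξ_apply] at hξβ
      nlinarith [heightOutside_nonneg (I := I) hβ.2, heightOutside_nonneg (I := I) hγ.2]
  obtain ⟨y, c, hyc⟩ := hγ.1
  -- The reflection in `γ` fixes `ξ`, hence lies in `W_I` and fixes the coordinates outside `I`.
  have ht : y * s c * y⁻¹ ∈ Subgroup.closure (cs.simple '' I) :=
    mem_closure_of_map_geomRep_of_forall_ssubset hmax (fun β hβ => hξ_apply β ▸ hξ β hβ) hξz hξI
      fun v => by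
        rw [geomRep_conj_simple_apply, hyc, map_sub, map_smul, hξ_apply γ, smul_eq_mul]
        ring
  have hγI : γ ∈ supported ℝ ℝ I := (mem_supported' ℝ γ).mpr fun b hb => by
    have := cs.geomRep_apply_of_notMem ht γ hb
    rw [geomRep_conj_simple_apply, hyc, bilinForm_self_of_mem_roots hγ.1] at this
    simp at this
    linarith
  exact hpγ.ne (Finsupp.supported_le_ker hpI hγI)

lemma map_single_eq_zero_of_map_geomRep_simple {p : Module.Dual ℝ (B →₀ ℝ)} {i : B}
    (h : ∀ v, p (cs.geomRep (s i) v) = p v) : p (single i 1) = 0 := by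
  have := h (single i 1)
  rw [geomRep_simple, M.simpleReflection_single_self, map_neg] at this
  linarith

variable (cs) (H : Subgroup W) [Fintype H]

def sumTranslates (f : Module.Dual ℝ (B →₀ ℝ)) : Module.Dual ℝ (B →₀ ℝ) :=
  ∑ x : H, f ∘ₗ (cs.geomRep (x : W)⁻¹).toLinearMap

lemma sumTranslates_apply (f : Module.Dual ℝ (B →₀ ℝ)) (v : B →₀ ℝ) :
    cs.sumTranslates H f v = ∑ x : H, f (cs.geomRep (x : W)⁻¹ v) := by
  simp [sumTranslates, LinearMap.sum_apply]

lemma sumTranslates_geomRep (f : Module.Dual ℝ (B →₀ ℝ)) {h : W} (hh : h ∈ H) (v : B →₀ ℝ) :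
    cs.sumTranslates H f (cs.geomRep h v) = cs.sumTranslates H f v := by
  simp only [sumTranslates_apply]
  refine Fintype.sum_equiv (Equiv.mulLeft ⟨h, hh⟩⁻¹) _ _ fun x => ?_
  rw [Equiv.coe_mulLeft, Subgroup.coe_mul, Subgroup.coe_inv, mul_inv_rev, inv_inv, map_mul,
    LinearEquiv.mul_apply]

theorem finite_posRoots_sumTranslates_heightOutside_nonpos {I : Set B}
    (hI : Finite (Subgroup.closure (cs.simple '' I))) :
    {β ∈ cs.posRoots | cs.sumTranslates H (heightOutside I) β ≤ 0}.Finite := by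
  refine ((Set.finite_iUnion fun x : H => cs.finite_posRoots_geomRep_nonpos (x : W)⁻¹).union
    (cs.finite_posRoots_supported hI)).subset ?_
  rintro β ⟨hβ, hle⟩
  by_cases hx : ∃ x : H, cs.geomRep (x : W)⁻¹ β ≤ 0
  · obtain ⟨x, hx⟩ := hx
    exact Or.inl (Set.mem_iUnion.mpr ⟨x, hβ, hx⟩)
  simp only [not_exists] at hx
  have hnonneg : ∀ x : H, 0 ≤ heightOutside I (cs.geomRep (x : W)⁻¹ β) := fun x =>
    heightOutside_nonneg
      ((nonneg_or_nonpos_of_mem_roots (geomRep_mem_roots hβ.1 _)).resolve_right (hx x))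
  rw [sumTranslates_apply] at hle
  have := (Finset.sum_eq_zero_iff_of_nonneg fun x _ => hnonneg x).mp
    (le_antisymm hle (Finset.sum_nonneg fun x _ => hnonneg x)) 1 (Finset.mem_univ _)
  exact Or.inr ⟨hβ, mem_supported_of_heightOutside_eq_zero hβ.2 (by simpa using this)⟩

end CoxeterSystem

end

/-- If `W_I` is a maximal finite standard parabolic subgroup of a Coxeter group `W` (i.e. `W_I`
is finite and `W_J` is infinite for every `J` with `I ⊊ J ⊆ S`), then `W_I` is a maximal finite
subgroup of `W`: every finite subgroup of `W` containing `W_I` equals `W_I`. -/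
theorem stmt_11 {B W : Type*} [Group W] {M : CoxeterMatrix B} (cs : CoxeterSystem M W)
    (I : Set B)
    (hfin : Finite ↥(Subgroup.closure (cs.simple '' I)))
    (hmax : ∀ J : Set B, I ⊂ J → Infinite ↥(Subgroup.closure (cs.simple '' J)))
    (H : Subgroup W) (hHfin : Finite ↥H)
    (hle : Subgroup.closure (cs.simple '' I) ≤ H) :
    H = Subgroup.closure (cs.simple '' I) := by
  have := Fintype.ofFinite H
  set p := cs.sumTranslates H (heightOutside I)
  have hp := cs.finite_posRoots_sumTranslates_heightOutside_nonpos H hfin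
  have hpI : ∀ i ∈ I, p (single i 1) = 0 := fun i hi =>
    CoxeterSystem.map_single_eq_zero_of_map_geomRep_simple
      (cs.sumTranslates_geomRep H _ (hle (Subgroup.subset_closure ⟨i, hi, rfl⟩)))
  have hdom := cs.nonneg_of_finite_posRoots_neg hfin hmax
    (hp.subset fun β hβ => ⟨hβ.1, hβ.2.le⟩) hpI
  refine le_antisymm (fun h hh => ?_) hle
  exact CoxeterSystem.mem_closure_of_map_geomRep_of_forall_ssubset hmax hdom
    (hp.subset fun β hβ => ⟨hβ.1, hβ.2.le⟩) hpI (cs.sumTranslates_geomRep H _ hh)
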